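/- arXiv:1801.07162 — 8 statements merged into one kernel-verified Lean document; each statement's English description precedes it below -/
import Mathlib

section
/- If B and P are two π-bases for a topological space X and player I has a winning strategy in the open-open game played with moves restricted to B, then player I has a winning strategy in the open-open game played with moves restricted to P. -/
open Topology

variable {X : Type*} [TopologicalSpace X]

/-- `B` is a π-base for `X`: a family of nonempty open sets such that every
nonempty open set contains a member of `B`. -/
def IsPiBase (B : Set (Set X)) : Prop :=
  (∀ U ∈ B, IsOpen U ∧ U.Nonempty) ∧
  ∀ U : Set X, IsOpen U → U.Nonempty → ∃ V ∈ B, V ⊆ U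

/-- `σ` is a winning strategy for player I in the open-open game with moves
restricted to the family `B`. -/
def IsWinningStrategy (B : Set (Set X)) (σ : List (Set X) → Set X) : Prop :=
  (∀ l : List (Set X), σ l ∈ B) ∧
  ∀ U : ℕ → Set X, (∀ n, U n ∈ B) → U 0 ⊆ σ [] →
    (∀ k, U (k + 1) ⊆ σ (List.ofFn fun i : Fin (k + 1) => U i)) →
    Dense (⋃ n, U n)

/-- If `B` and `P` are two π-bases for `X` and player I has a winning strategy
on `B`, then player I has a winning strategy on `P`. -/
theorem winning_strategy_transfer {B P : Set (Set X)} (hB : IsPiBase B) (hP : IsPiBase P)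
    (h : ∃ σ : List (Set X) → Set X, IsWinningStrategy B σ) :
    ∃ μ : List (Set X) → Set X, IsWinningStrategy P μ := by
  obtain ⟨σ, hσB, hσwin⟩ := h
  -- translate a set (a P-move) to a B-element inside it
  have hw : ∀ U : Set X, ∃ W : Set X, W ∈ B ∧ (IsOpen U → U.Nonempty → W ⊆ U) := by
    intro U
    by_cases hU : IsOpen U ∧ U.Nonempty
    · obtain ⟨W, hW, hWU⟩ := hB.2 U hU.1 hU.2
      exact ⟨W, hW, fun _ _ => hWU⟩
    · exact ⟨σ [], hσB [], fun h1 h2 => absurd ⟨h1, h2⟩ hU⟩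
  choose w hwB hwsub using hw
  -- translate a set (a B-move, open nonempty) to a P-element inside it
  have hp : ∀ V : Set X, ∃ Q : Set X, (IsOpen V → V.Nonempty → Q ∈ P ∧ Q ⊆ V) := by
    intro V
    by_cases hV : IsOpen V ∧ V.Nonempty
    · obtain ⟨Q, hQ, hQV⟩ := hP.2 V hV.1 hV.2
      exact ⟨Q, fun _ _ => ⟨hQ, hQV⟩⟩
    · exact ⟨∅, fun h1 h2 => absurd ⟨h1, h2⟩ hV⟩
  choose p hpspec using hp
  have hpP : ∀ l : List (Set X), p (σ l) ∈ P ∧ p (σ l) ⊆ σ l := fun l =>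
    hpspec (σ l) (hB.1 _ (hσB l)).1 (hB.1 _ (hσB l)).2
  refine ⟨fun l => p (σ (l.map w)), fun l => (hpP _).1, ?_⟩
  intro U hU hU0 hUk
  have hWsub : ∀ n, w (U n) ⊆ U n := fun n =>
    hwsub (U n) (hP.1 _ (hU n)).1 (hP.1 _ (hU n)).2
  have key : Dense (⋃ n, w (U n)) := by
    apply hσwin (fun n => w (U n)) (fun n => hwB (U n))
    · exact (hWsub 0).trans (hU0.trans (hpP _).2)
    · intro k
      have : (List.ofFn fun i : Fin (k + 1) => U i).map w =
          List.ofFn fun i : Fin (k + 1) => w (U i) := by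
        simp [List.map_ofFn, Function.comp_def]
      calc w (U (k + 1)) ⊆ U (k + 1) := hWsub (k + 1)
        _ ⊆ p (σ ((List.ofFn fun i : Fin (k + 1) => U i).map w)) := hUk k
        _ ⊆ σ ((List.ofFn fun i : Fin (k + 1) => U i).map w) := (hpP _).2
        _ = σ (List.ofFn fun i : Fin (k + 1) => w (U i)) := by rw [this]
  exact key.mono (Set.iUnion_mono hWsub)
end

section
/- If f : X → Y is a closed skeletal surjection between topological spaces, U ⊆ X is open nonempty, and V is a dense open subset of Int(cl(f(U))), then f⁻¹(V) ∩ U is nonempty. -/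
open Topology

/-- A continuous map is skeletal if the interior of the closure of the image of
every nonempty open set is nonempty. -/
def IsSkeletalMap {X Y : Type*} [TopologicalSpace X] [TopologicalSpace Y] (f : X → Y) : Prop :=
  Continuous f ∧
  ∀ U : Set X, IsOpen U → U.Nonempty → (interior (closure (f '' U))).Nonempty

/-- If `f : X → Y` is a closed skeletal surjection, `U ⊆ X` is open nonempty, and `V` is
a dense open subset of `Int cl (f '' U)`, then `f ⁻¹ V ∩ U` is nonempty. -/
theorem preimage_inter_nonempty {X Y : Type*} [TopologicalSpace X] [TopologicalSpace Y]
    {f : X → Y} (hskel : IsSkeletalMap f) (hclosed : IsClosedMap f)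
    (hsurj : Function.Surjective f)
    {U : Set X} (hU : IsOpen U) (hUne : U.Nonempty)
    {V : Set Y} (hV : IsOpen V) (hVsub : V ⊆ interior (closure (f '' U)))
    (hVdense : interior (closure (f '' U)) ⊆ closure V) :
    (f ⁻¹' V ∩ U).Nonempty := by
  by_contra h
  rw [Set.not_nonempty_iff_eq_empty] at h
  -- f '' U ⊆ Vᶜ
  have himg : f '' U ⊆ Vᶜ := by
    rintro y ⟨x, hxU, rfl⟩ hyV
    exact Set.eq_empty_iff_forall_notMem.mp h x ⟨hyV, hxU⟩
  have hcl : closure (f '' U) ⊆ Vᶜ :=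
    closure_minimal himg (hV.isClosed_compl)
  have hVempty : V = ∅ := by
    apply Set.eq_empty_iff_forall_notMem.mpr
    intro y hy
    exact hcl (interior_subset (hVsub hy)) hy
  obtain ⟨y, hy⟩ := hskel.2 U hU hUne
  have := hVdense hy
  rw [hVempty, closure_empty] at this
  exact this
end

section
/- If a subspace X of a space Y admits a π-regular embedding operator and Y is extremally disconnected, then X is extremally disconnected; more precisely, for every open U ⊆ X, the closure of e(U) in Y intersected with X equals the closure of U in X. -/
open Topology

/-- A π-regular operator for the subspace `X ⊆ Y`: a map from open subsets of `X`
to open subsets of `Y` sending disjoint sets to disjoint sets, with `e U ∩ X`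
a dense subset of `U`. -/
def IsPiRegularOp {Y : Type*} [TopologicalSpace Y] (X : Set Y) (e : Set ↥X → Set Y) : Prop :=
  (∀ U : Set ↥X, IsOpen U → IsOpen (e U)) ∧
  (∀ U V : Set ↥X, IsOpen U → IsOpen V → U ∩ V = ∅ → e U ∩ e V = ∅) ∧
  (∀ U : Set ↥X, IsOpen U →
    (Subtype.val ⁻¹' (e U) ⊆ U ∧ U ⊆ closure (Subtype.val ⁻¹' (e U))))

/-- If `X ⊆ Y` admits a π-regular embedding operator and `Y` is extremally disconnected,
then for every open `U ⊆ X` the trace on `X` of the closure of `e U` in `Y` equals the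
closure of `U` in `X`; in particular `X` is extremally disconnected. -/
theorem extremallyDisconnected_of_piRegular {Y : Type*} [TopologicalSpace Y]
    [ExtremallyDisconnected Y] {X : Set Y} {e : Set ↥X → Set Y}
    (he : IsPiRegularOp X e) :
    (∀ U : Set ↥X, IsOpen U → Subtype.val ⁻¹' closure (e U) = closure U) ∧
    ExtremallyDisconnected ↥X := by
  obtain ⟨hopen, hdisj, hdense⟩ := he
  have key : ∀ U : Set ↥X, IsOpen U → Subtype.val ⁻¹' closure (e U) = closure U := by
    intro U hU
    apply Set.Subset.antisymm
    · -- if x ∉ closure U, find open V ∋ x disjoint from U, derive contradiction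
      intro x hx
      by_contra hxc
      obtain ⟨V, hVopen, hxV, hVU⟩ :
          ∃ V : Set ↥X, IsOpen V ∧ x ∈ V ∧ V ∩ U = ∅ := by
        have : x ∈ (closure U)ᶜ := hxc
        refine ⟨(closure U)ᶜ, isOpen_compl_iff.mpr isClosed_closure, this, ?_⟩
        rw [Set.eq_empty_iff_forall_notMem]
        rintro y ⟨hy1, hy2⟩
        exact hy1 (subset_closure hy2)
      -- x ∈ closure (e V)
      have hxeV : (x : Y) ∈ closure (e V) := by
        have h1 := (hdense V hVopen).2 hxV
        have h2 : closure (Subtype.val ⁻¹' e V) ⊆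
            (Subtype.val : ↥X → Y) ⁻¹' closure (e V) :=
          (continuous_subtype_val).closure_preimage_subset _
        exact h2 h1
      -- e U and e V are disjoint open sets
      have hd : e V ∩ e U = ∅ := hdisj V U hVopen hU hVU
      -- closure (e U) is open (extremal disconnectedness), disjoint from e V
      have hcl : IsOpen (closure (e U)) :=
        ExtremallyDisconnected.open_closure _ (hopen U hU)
      have hdisj1 : Disjoint (closure (e U)) (e V) := by
        have : Disjoint (e V) (e U) := Set.disjoint_iff_inter_eq_empty.mpr hd
        exact (this.symm).closure_left (hopen V hVopen)
      have hdisj2 : Disjoint (closure (e U)) (closure (e V)) :=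
        hdisj1.closure_right hcl
      exact (hdisj2.ne_of_mem hx hxeV) rfl
    · -- closure U ⊆ val ⁻¹' closure (e U), since latter is closed and contains U
      apply closure_minimal
      · intro x hxU
        have h1 := (hdense U hU).2 hxU
        exact (continuous_subtype_val).closure_preimage_subset _ h1
      · exact (isClosed_closure).preimage continuous_subtype_val
  refine ⟨key, ⟨fun U hU => ?_⟩⟩
  rw [← key U hU]
  exact (ExtremallyDisconnected.open_closure _ (hopen U hU)).preimage continuous_subtype_val
end

section
/- If d is a quasi κ-metric on a compact Hausdorff space Y and X is a dense subspace of Y, then d_X(x, cl_X(U)) := d(x, cl_Y(U)) for x ∈ X and U open in X defines a quasi κ-metric on X. -/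
/-!
Sending a canonically closed `C ⊆ X` to `cl_Y (Int_X C)` is a monotone map into the canonically
closed subsets of `Y` whose trace on `X` is `C` again and which carries `cl_X (⋃ Cᵢ)` to
`cl_Y (⋃ cl_Y (Int_X Cᵢ))`. Pulling `d` back along it therefore preserves K1*–K4, and on
`C = cl_X U` it gives `cl_Y U`.
-/

open Topology

universe u

/-- A quasi κ-metric on a space `Y`: a nonnegative function `ρ(y, C)` of a point and a
canonically closed set, satisfying axioms K1*, K2, K3, K4. -/
structure QuasiKappaMetric (Y : Type u) [TopologicalSpace Y] where
  ρ : Y → Set Y → ℝ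
  nonneg : ∀ (y : Y) (C : Set Y), 0 ≤ ρ y C
  k1star : ∀ C : Set Y, C = closure (interior C) →
    ∃ V : Set Y, IsOpen V ∧ V ⊆ Cᶜ ∧ Cᶜ ⊆ closure V ∧ ∀ y, ρ y C = 0 ↔ y ∉ V
  k2 : ∀ (y : Y) (C C' : Set Y), C = closure (interior C) → C' = closure (interior C') →
    C ⊆ C' → ρ y C' ≤ ρ y C
  k3 : ∀ C : Set Y, C = closure (interior C) → Continuous fun y => ρ y C
  k4 : ∀ (ι : Type u) [LinearOrder ι] [Nonempty ι] (C : ι → Set Y),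
    (∀ i, C i = closure (interior (C i))) → Monotone C →
    ∀ y, ρ y (closure (⋃ i, C i)) = ⨅ i, ρ y (C i)

open Set

section
variable {Y : Type u} [TopologicalSpace Y]

theorem Dense.closure_inter_of_isOpen {s t : Set Y} (hs : Dense s) (ht : IsOpen t) :
    closure (s ∩ t) = closure t :=
  (closure_mono inter_subset_right).antisymm <|
    closure_minimal (inter_comm t s ▸ hs.open_subset_closure_inter ht) isClosed_closure

theorem closure_iUnion_closure_eq {ι : Sort*} (A : ι → Set Y) :
    closure (⋃ i, closure (A i)) = closure (⋃ i, A i) :=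
  (closure_minimal (iUnion_subset fun i => closure_mono (subset_iUnion A i)) isClosed_closure).antisymm
    (closure_mono (iUnion_mono fun _ => subset_closure))

theorem IsOpen.closure_interior_closure {O : Set Y} (hO : IsOpen O) :
    closure (interior (closure O)) = closure O := by
  simpa only [hO.interior_eq] using closure_interior_idem (s := O)

variable {X : Set Y}

theorem closure_image_val_preimage (hX : Dense X) {O : Set Y} (hO : IsOpen O) :
    closure (Subtype.val '' (Subtype.val ⁻¹' O : Set X)) = closure O := by
  rw [Subtype.image_preimage_coe, hX.closure_inter_of_isOpen hO]

theorem closure_image_val_eq_closure_interior (hX : Dense X) {W : Set X} (hW : IsOpen W) :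
    closure (Subtype.val '' W) = closure (interior (closure (Subtype.val '' W))) := by
  obtain ⟨O, hO, rfl⟩ := isOpen_induced_iff.mp hW
  rw [closure_image_val_preimage hX hO, hO.closure_interior_closure]

variable (X) in
def canonicalExtension (C : Set X) : Set Y :=
  closure (Subtype.val '' interior C)

theorem canonicalExtension_eq_closure_interior (hX : Dense X) (C : Set X) :
    canonicalExtension X C = closure (interior (canonicalExtension X C)) :=
  closure_image_val_eq_closure_interior hX isOpen_interior

theorem canonicalExtension_mono : Monotone (canonicalExtension X) :=
  fun _ _ h => closure_mono (image_mono (interior_mono h))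

theorem preimage_canonicalExtension {C : Set X} (hC : C = closure (interior C)) :
    Subtype.val ⁻¹' canonicalExtension X C = C := by
  rw [canonicalExtension, ← IsEmbedding.subtypeVal.closure_eq_preimage_closure_image, ← hC]

theorem canonicalExtension_closure {U : Set X} (hU : IsOpen U) :
    canonicalExtension X (closure U) = closure (Subtype.val '' U) := by
  refine (closure_minimal ?_ isClosed_closure).antisymm
    (closure_mono (image_mono (interior_maximal subset_closure hU)))
  calc Subtype.val '' interior (closure U)
      ⊆ Subtype.val '' (Subtype.val ⁻¹' closure (Subtype.val '' U)) := by
        rw [← IsEmbedding.subtypeVal.closure_eq_preimage_closure_image]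
        exact image_mono interior_subset
    _ ⊆ closure (Subtype.val '' U) := image_preimage_subset _ _

theorem canonicalExtension_closure_iUnion {ι : Sort*} {C : ι → Set X}
    (hC : ∀ i, C i = closure (interior (C i))) :
    canonicalExtension X (closure (⋃ i, C i)) =
      closure (⋃ i, canonicalExtension X (C i)) := by
  have hU : closure (⋃ i, C i) = closure (⋃ i, interior (C i)) := by
    rw [← closure_iUnion_closure_eq fun i => interior (C i), ← iUnion_congr hC]
  rw [hU, canonicalExtension_closure (isOpen_iUnion fun _ => isOpen_interior), image_iUnion,
    ← closure_iUnion_closure_eq]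
  rfl

theorem QuasiKappaMetric.k1star_canonicalExtension (d : QuasiKappaMetric Y) (hX : Dense X) {C : Set X}
    (hC : C = closure (interior C)) :
    ∃ V : Set X, IsOpen V ∧ V ⊆ Cᶜ ∧ Cᶜ ⊆ closure V ∧
      ∀ x : X, d.ρ x (canonicalExtension X C) = 0 ↔ x ∉ V := by
  obtain ⟨V, hVo, hVC, hCV, hρ⟩ :=
    d.k1star _ (canonicalExtension_eq_closure_interior hX C)
  have hpre := preimage_canonicalExtension hC
  refine ⟨Subtype.val ⁻¹' V, hVo.preimage continuous_subtype_val,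
    fun x hxV hxC => hVC hxV (hpre.ge hxC), fun x hxC => ?_, fun x => hρ x⟩
  rw [IsEmbedding.subtypeVal.closure_eq_preimage_closure_image, closure_image_val_preimage hX hVo]
  exact hCV fun hx => hxC (hpre.le hx)

def QuasiKappaMetric.restrictDense (d : QuasiKappaMetric Y) (hX : Dense X) :
    QuasiKappaMetric X where
  ρ x C := d.ρ x (canonicalExtension X C)
  nonneg _ _ := d.nonneg _ _
  k1star _ hC := d.k1star_canonicalExtension hX hC
  k2 x _ _ _ _ h := d.k2 x _ _ (canonicalExtension_eq_closure_interior hX _)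
    (canonicalExtension_eq_closure_interior hX _) (canonicalExtension_mono h)
  k3 C _ := (d.k3 _ (canonicalExtension_eq_closure_interior hX C)).comp continuous_subtype_val
  k4 ι _ _ C hC hmono x := by
    simp only [canonicalExtension_closure_iUnion hC]
    exact d.k4 ι _ (fun i => canonicalExtension_eq_closure_interior hX (C i))
      (canonicalExtension_mono.comp hmono) x

end

theorem quasiKappaMetric_of_dense_subspace_general {Y : Type u} [TopologicalSpace Y]
    {X : Set Y} (hX : Dense X) (d : QuasiKappaMetric Y) :
    ∃ dX : QuasiKappaMetric ↥X, ∀ (x : ↥X) (U : Set ↥X), IsOpen U →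
      dX.ρ x (closure U) = d.ρ (x : Y) (closure (Subtype.val '' U)) :=
  ⟨d.restrictDense hX, fun x _ hU => congrArg (d.ρ x) (canonicalExtension_closure hU)⟩

/-- If `d` is a quasi κ-metric on a compact Hausdorff space `Y` and `X ⊆ Y` is dense,
then `d_X(x, cl_X U) := d(x, cl_Y U)` (for `U` open in `X`) defines a quasi κ-metric
on `X`. -/
theorem quasiKappaMetric_of_dense_subspace {Y : Type u} [TopologicalSpace Y]
    [CompactSpace Y] [T2Space Y] {X : Set Y} (hX : Dense X) (d : QuasiKappaMetric Y) :
    ∃ dX : QuasiKappaMetric ↥X, ∀ (x : ↥X) (U : Set ↥X), IsOpen U →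
      dX.ρ x (closure U) = d.ρ (x : Y) (closure (Subtype.val '' U)) :=
  quasiKappaMetric_of_dense_subspace_general hX d
end

section
/- Let S = {X_α, p^β_α, α < β < τ} be an almost continuous inverse system with skeletal bonding maps and X = a-lim S. If U = p_α⁻¹(V) for some open V ⊆ X_α, then the rank q(U) is disjoint from [α, τ). -/
/-! For a skeletal map `f` and open `W`, `Int f⁻¹(cl W) ⊆ cl f⁻¹(W)`: a nonempty open `O` inside
`f⁻¹(cl W)` has `cl f(O)` with nonempty interior inside `cl W`, hence meeting `W`, so `O` meets
`f⁻¹ W`. For `U = p_α⁻¹ V` and `β ≥ α`, the projections of `U` to `X_β` and `X_{β+1}` are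
`W = (p^β_α)⁻¹ V` and `(p^{β+1}_β)⁻¹ W`, so the set defining `β ∈ q(U)` has empty interior. -/

open Topology Order

universe u

/-- An inverse system of topological spaces indexed by the ordinals below `τ`,
with continuous surjective bonding maps. -/
structure InvSystem (τ : Ordinal.{u}) where
  X : Ordinal.{u} → Type u
  topo : ∀ α, TopologicalSpace (X α)
  p : ∀ α β, α ≤ β → X β → X α
  p_cont : ∀ α β (h : α ≤ β), Continuous (p α β h)
  p_surj : ∀ α β (h : α ≤ β), β < τ → Function.Surjective (p α β h)
  p_id : ∀ α (x : X α), p α α le_rfl x = x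
  p_comp : ∀ α β γ (h₁ : α ≤ β) (h₂ : β ≤ γ) (x : X γ),
    p α β h₁ (p β γ h₂ x) = p α γ (h₁.trans h₂) x

attribute [instance] InvSystem.topo

namespace InvSystem

variable {τ : Ordinal.{u}} (S : InvSystem τ)

/-- The inverse limit of the subsystem indexed by the ordinals below `γ`. -/
def lim (γ : Ordinal.{u}) : Set (∀ α : {o : Ordinal.{u} // o < γ}, S.X α.1) :=
  {f | ∀ (a b : {o : Ordinal.{u} // o < γ}) (h : a.1 ≤ b.1), S.p a.1 b.1 h (f b) = f a}

/-- The canonical map from `X γ` to the inverse limit of the subsystem below `γ`. -/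
def diag (γ : Ordinal.{u}) (x : S.X γ) : ↥(S.lim γ) :=
  ⟨fun a => S.p a.1 γ a.2.le x, fun a b h => S.p_comp a.1 b.1 γ h b.2.le x⟩

/-- The system is almost continuous: for every limit ordinal `γ < τ`, `X γ` embeds
densely into the inverse limit of the subsystem below `γ`, compatibly with the
projections. -/
def AlmostContinuous : Prop :=
  ∀ γ : Ordinal.{u}, γ < τ → Order.IsSuccLimit γ →
    Topology.IsEmbedding (S.diag γ) ∧ DenseRange (S.diag γ)

variable (A : Set (∀ α : {o : Ordinal.{u} // o < τ}, S.X α.1))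

/-- The `α`-th limit projection restricted to `A`. -/
def proj (α : Ordinal.{u}) (h : α < τ) : ↥A → S.X α :=
  fun x => x.1 ⟨α, h⟩

/-- `A` is the almost limit of `S`: it is a subspace of the inverse limit whose
projections are onto the `X α`. -/
def IsALim : Prop :=
  A ⊆ S.lim τ ∧ ∀ (α : Ordinal.{u}) (h : α < τ), Function.Surjective (S.proj A α h)

/-- The rank of a subset `U` of the almost limit `A`. -/
def rank (U : Set ↥A) : Set Ordinal.{u} :=
  {α | ∃ h : succ α < τ,
    (interior ((S.p α (succ α) (le_succ α) ⁻¹'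
        closure (S.proj A α ((lt_succ α).trans h) '' U)) \
      closure (S.proj A (succ α) h '' U))).Nonempty}

end InvSystem

/-- A continuous map is nearly open if `f(U) ⊆ Int cl f(U)` for every open `U`. -/
def IsNearlyOpenMap {X Y : Type*} [TopologicalSpace X] [TopologicalSpace Y] (f : X → Y) : Prop :=
  ∀ U : Set X, IsOpen U → f '' U ⊆ interior (closure (f '' U))

section Skeletal

variable {X Y : Type*} [TopologicalSpace X] [TopologicalSpace Y] {f : X → Y}

theorem IsSkeletalMap.interior_preimage_closure_subset (hf : IsSkeletalMap f) {W : Set Y}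
    (hW : IsOpen W) : interior (f ⁻¹' closure W) ⊆ closure (f ⁻¹' W) := by
  intro x hx
  refine mem_closure_iff.mpr fun N hN hxN => ?_
  set O := N ∩ interior (f ⁻¹' closure W)
  have hfO : closure (f '' O) ⊆ closure W :=
    closure_minimal (Set.image_subset_iff.mpr fun z hz => interior_subset hz.2) isClosed_closure
  obtain ⟨w, hwW, hwI⟩ : (W ∩ interior (closure (f '' O))).Nonempty :=
    (closure_inter_open_nonempty_iff isOpen_interior).mp <| by
      rw [Set.inter_eq_right.mpr (interior_subset.trans hfO)]
      exact hf.2 O (hN.inter isOpen_interior) ⟨x, hxN, hx⟩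
  obtain ⟨_, hzW, z, hzO, rfl⟩ := mem_closure_iff.mp (interior_subset hwI) W hW hwW
  exact ⟨z, hzO.1, hzW⟩

theorem IsSkeletalMap.interior_preimage_closure_diff_eq_empty (hf : IsSkeletalMap f)
    {W : Set Y} (hW : IsOpen W) : interior (f ⁻¹' closure W \ closure (f ⁻¹' W)) = ∅ :=
  Set.eq_empty_of_forall_notMem fun _ hx =>
    (interior_subset hx).2 <|
      hf.interior_preimage_closure_subset hW (interior_mono Set.sdiff_subset hx)

end Skeletal

namespace InvSystem

variable {τ : Ordinal.{u}} (S : InvSystem τ)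

theorem preimage_p_trans {α β γ : Ordinal.{u}} (h₁ : α ≤ β) (h₂ : β ≤ γ) (V : Set (S.X α)) :
    S.p α γ (h₁.trans h₂) ⁻¹' V = S.p β γ h₂ ⁻¹' (S.p α β h₁ ⁻¹' V) := by
  ext x
  simp only [Set.mem_preimage, S.p_comp]

variable {S} {A : Set (∀ α : {o : Ordinal.{u} // o < τ}, S.X α.1)}

theorem IsALim.p_proj (hA : S.IsALim A) {α γ : Ordinal.{u}} (hα : α < τ) (hγ : γ < τ)
    (h : α ≤ γ) (x : ↥A) : S.p α γ h (S.proj A γ hγ x) = S.proj A α hα x :=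
  hA.1 x.2 ⟨α, hα⟩ ⟨γ, hγ⟩ h

theorem IsALim.image_proj_preimage (hA : S.IsALim A) {α γ : Ordinal.{u}} (hα : α < τ)
    (hγ : γ < τ) (h : α ≤ γ) (V : Set (S.X α)) :
    S.proj A γ hγ '' (S.proj A α hα ⁻¹' V) = S.p α γ h ⁻¹' V := by
  have hcomp : S.proj A α hα = S.p α γ h ∘ S.proj A γ hγ :=
    funext fun x => (hA.p_proj hα hγ h x).symm
  rw [hcomp, Set.preimage_comp, Set.image_preimage_eq _ (hA.2 γ hγ)]

end InvSystem

open Order InvSystem in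
theorem rank_preimage_disjoint_general {τ : Ordinal.{u}} (S : InvSystem τ)
    (A : Set (∀ α : {o : Ordinal.{u} // o < τ}, S.X α.1))
    (hskel : ∀ (α β : Ordinal.{u}) (h : α ≤ β), β < τ → IsSkeletalMap (S.p α β h))
    (hA : S.IsALim A)
    (α : Ordinal.{u}) (hα : α < τ) (V : Set (S.X α)) (hV : IsOpen V) :
    ∀ β : Ordinal.{u}, α ≤ β → β ∉ S.rank A (S.proj A α hα ⁻¹' V) := by
  rintro β hαβ ⟨hsβ, hne⟩
  rw [hA.image_proj_preimage hα _ hαβ, hA.image_proj_preimage hα hsβ (hαβ.trans (le_succ β)),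
    S.preimage_p_trans hαβ (le_succ β)] at hne
  exact hne.ne_empty <| (hskel β (succ β) (le_succ β) hsβ).interior_preimage_closure_diff_eq_empty
    (hV.preimage (S.p_cont α β hαβ))

open Order InvSystem in
/-- For an almost continuous inverse system with skeletal bonding maps and `A = a-lim S`,
if `U = p_α⁻¹(V)` for some open `V ⊆ X_α`, then the rank `q(U)` is disjoint from `[α, τ)`. -/
theorem rank_preimage_disjoint {τ : Ordinal.{u}} (S : InvSystem τ)
    (A : Set (∀ α : {o : Ordinal.{u} // o < τ}, S.X α.1))
    (hac : S.AlmostContinuous)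
    (hskel : ∀ (α β : Ordinal.{u}) (h : α ≤ β), β < τ → IsSkeletalMap (S.p α β h))
    (hA : S.IsALim A)
    (α : Ordinal.{u}) (hα : α < τ) (V : Set (S.X α)) (hV : IsOpen V) :
    ∀ β : Ordinal.{u}, α ≤ β → β ∉ S.rank A (S.proj A α hα ⁻¹' V) :=
  rank_preimage_disjoint_general S A hskel hA α hα V hV
end

section
/- Let S = {X_α, p^β_α, α < β < τ} be an almost continuous inverse system with skeletal bonding maps, X = a-lim S, and U ⊆ X open. Then α ∉ q(U) if and only if (p^{α+1}_α)⁻¹( Int cl(p_α(U)) ) ⊆ cl(p_{α+1}(U)). -/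
open Topology Order

universe u

section Skeletal

variable {X Y : Type*} [TopologicalSpace X] [TopologicalSpace Y] {f : X → Y}

theorem IsSkeletalMap.exists_mem_interior_of_image_subset (hf : IsSkeletalMap f)
    {V : Set X} (hV : IsOpen V) (hne : V.Nonempty) {C : Set Y} (hC : IsClosed C)
    (hVC : f '' V ⊆ C) : ∃ v ∈ V, f v ∈ interior C := by
  obtain ⟨w, hw⟩ := hf.2 V hV hne
  obtain ⟨_, hwW, v, hv, rfl⟩ :=
    mem_closure_iff.mp (interior_subset hw) _ isOpen_interior hw
  exact ⟨v, hv, interior_mono (closure_minimal hVC hC) hwW⟩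

theorem IsSkeletalMap.preimage_interior_subset_iff (hf : IsSkeletalMap f)
    {C : Set Y} {D : Set X} (hC : IsClosed C) (hD : IsClosed D) :
    f ⁻¹' interior C ⊆ D ↔ interior (f ⁻¹' C \ D) = ∅ := by
  constructor
  · intro hsub
    by_contra hne
    obtain ⟨v, hv, hvC⟩ := hf.exists_mem_interior_of_image_subset isOpen_interior
      (Set.nonempty_iff_ne_empty.mpr hne) hC
      (Set.image_subset_iff.mpr fun x hx => (interior_subset hx).1)
    exact (interior_subset hv).2 (hsub hvC)
  · intro hempty x hx
    by_contra hxD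
    have hopen : IsOpen (f ⁻¹' interior C \ D) :=
      (isOpen_interior.preimage hf.1).sdiff hD
    have hmem : x ∈ interior (f ⁻¹' C \ D) :=
      interior_maximal (Set.sdiff_subset_sdiff_left (Set.preimage_mono interior_subset))
        hopen ⟨hx, hxD⟩
    simp [hempty] at hmem

end Skeletal

open Order InvSystem in
theorem not_mem_rank_iff_general {τ : Ordinal.{u}} (S : InvSystem τ)
    (A : Set (∀ α : {o : Ordinal.{u} // o < τ}, S.X α.1))
    (hskel : ∀ (α β : Ordinal.{u}) (h : α ≤ β), β < τ → IsSkeletalMap (S.p α β h))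
    (U : Set ↥A) (α : Ordinal.{u}) (h : succ α < τ) :
    α ∉ S.rank A U ↔
      S.p α (succ α) (le_succ α) ⁻¹'
          interior (closure (S.proj A α ((lt_succ α).trans h) '' U)) ⊆
        closure (S.proj A (succ α) h '' U) := by
  rw [(hskel α (succ α) (le_succ α) h).preimage_interior_subset_iff isClosed_closure
    isClosed_closure, ← Set.not_nonempty_iff_eq_empty]
  exact ⟨fun hα hne => hα ⟨h, hne⟩, fun hempty ⟨_, hne⟩ => hempty hne⟩

open Order InvSystem in
/-- For an almost continuous inverse system with skeletal bonding maps, `A = a-lim S`, and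
`U ⊆ A` open: `α ∉ q(U)` iff `(p^{α+1}_α)⁻¹(Int cl p_α(U)) ⊆ cl p_{α+1}(U)`. -/
theorem not_mem_rank_iff {τ : Ordinal.{u}} (S : InvSystem τ)
    (A : Set (∀ α : {o : Ordinal.{u} // o < τ}, S.X α.1))
    (hac : S.AlmostContinuous)
    (hskel : ∀ (α β : Ordinal.{u}) (h : α ≤ β), β < τ → IsSkeletalMap (S.p α β h))
    (hA : S.IsALim A)
    (U : Set ↥A) (hU : IsOpen U) (α : Ordinal.{u}) (h : succ α < τ) :
    α ∉ S.rank A U ↔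
      S.p α (succ α) (le_succ α) ⁻¹'
          interior (closure (S.proj A α ((lt_succ α).trans h) '' U)) ⊆
        closure (S.proj A (succ α) h '' U) :=
  not_mem_rank_iff_general S A hskel U α h
end

section
/- Let S = {X_α, p^β_α, α < β < τ} be an almost continuous inverse system with nearly open bonding maps and X = a-lim S. Then the family of open subsets of X having finite rank is a base for the topology of X. -/
open Topology Order

universe u

/-!
For a nearly open map `f` and an open set `G`, the set `f⁻¹(cl G) \ cl(f⁻¹ G)` has empty
interior. Hence an open set pulled back from a level `X_ε` acquires no rank at levels `≥ ε`,
and its rank below `ε` is the rank it already had in `X_ε`. Finite-rank open sets therefore form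
a base of every `X_δ`, by transfinite induction: at `δ = ε + 1` replace a neighbourhood `V` by
`V ∩ p⁻¹ W`, where `W ⊆ Int cl p(V)` is a finite-rank neighbourhood in `X_ε` (near openness), which
adds at most the level `ε` to the rank; at a limit `δ`, and likewise for the almost limit, the
cylinders `p_ε⁻¹ N` with `ε < δ` form a base, so pulling back finite-rank sets suffices.
-/

open TopologicalSpace

theorem IsNearlyOpenMap.interior_preimage_closure_diff_closure_preimage_eq_empty
    {X Y : Type*} [TopologicalSpace X] [TopologicalSpace Y] {f : X → Y}
    (hf : IsNearlyOpenMap f) {G : Set Y} (hG : IsOpen G) :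
    interior (f ⁻¹' closure G \ closure (f ⁻¹' G)) = ∅ := by
  set O := interior (f ⁻¹' closure G \ closure (f ⁻¹' G))
  refine Set.eq_empty_of_forall_notMem fun z hz => ?_
  have hGO : Disjoint G (f '' O) := Set.disjoint_right.mpr <| by
    rintro _ ⟨o, ho, rfl⟩ hoG
    exact (interior_subset ho).2 (subset_closure hoG)
  have hcl : Disjoint (closure G) (interior (closure (f '' O))) :=
    ((hGO.closure_right hG).mono_right interior_subset).closure_left isOpen_interior
  exact hcl.ne_of_mem (interior_subset hz).1 (hf O isOpen_interior ⟨z, hz, rfl⟩) rfl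

theorem closure_image_inter_preimage_of_subset_closure {X Y : Type*} [TopologicalSpace Y]
    {f : X → Y} {V : Set X} {W : Set Y} (hW : IsOpen W) (hWV : W ⊆ closure (f '' V)) :
    closure (f '' (V ∩ f ⁻¹' W)) = closure W := by
  rw [Set.image_inter_preimage, Set.inter_comm]
  exact subset_antisymm (closure_mono Set.inter_subset_left)
    (closure_minimal (fun w hw => hW.inter_closure ⟨hw, hWV hw⟩) isClosed_closure)

namespace InvSystem

variable {τ : Ordinal.{u}} (S : InvSystem τ)

theorem image_p_comp {α β γ : Ordinal.{u}} (h₁ : α ≤ β) (h₂ : β ≤ γ) (s : Set (S.X γ)) :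
    S.p α β h₁ '' (S.p β γ h₂ '' s) = S.p α γ (h₁.trans h₂) '' s := by
  rw [Set.image_image]
  exact Set.image_congr fun x _ => S.p_comp α β γ h₁ h₂ x

theorem preimage_p_comp {α β γ : Ordinal.{u}} (h₁ : α ≤ β) (h₂ : β ≤ γ) (s : Set (S.X α)) :
    S.p β γ h₂ ⁻¹' (S.p α β h₁ ⁻¹' s) = S.p α γ (h₁.trans h₂) ⁻¹' s := by
  ext x
  simp only [Set.mem_preimage, S.p_comp]

def IsCone {Y : Type*} {δ : Ordinal.{u}} (q : ∀ α, α < δ → Y → S.X α) : Prop :=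
  ∀ α β (h : α ≤ β) (hβ : β < δ) (y : Y), S.p α β h (q β hβ y) = q α (h.trans_lt hβ) y

def rankAlong {Y : Type*} (δ : Ordinal.{u}) (q : ∀ α, α < δ → Y → S.X α) (U : Set Y) :
    Set Ordinal.{u} :=
  {α | ∃ h : succ α < δ,
    (interior ((S.p α (succ α) (le_succ α) ⁻¹'
        closure (q α ((lt_succ α).trans h) '' U)) \
      closure (q (succ α) h '' U))).Nonempty}

theorem rank_eq_rankAlong (A : Set (∀ α : {o : Ordinal.{u} // o < τ}, S.X α.1)) :
    S.rank A = S.rankAlong τ (S.proj A) :=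
  rfl

def levelProj (δ : Ordinal.{u}) (α : Ordinal.{u}) (h : α < succ δ) : S.X δ → S.X α :=
  S.p α δ (le_of_lt_succ h)

/-- The rank of `W ⊆ X δ`, with `X δ` regarded as the limit of the subsystem on the levels
`α < succ δ`, i.e. up to and including `δ` itself. -/
def levelRank (δ : Ordinal.{u}) : Set (S.X δ) → Set Ordinal.{u} :=
  S.rankAlong (succ δ) (S.levelProj δ)

theorem isCone_p (δ : Ordinal.{u}) : S.IsCone fun α (h : α < δ) => S.p α δ h.le :=
  fun α β h hβ y => S.p_comp α β δ h hβ.le y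

theorem isCone_proj {A : Set (∀ α : {o : Ordinal.{u} // o < τ}, S.X α.1)} (hA : A ⊆ S.lim τ) :
    S.IsCone (S.proj A) :=
  fun α β h hβ x => hA x.2 ⟨α, h.trans_lt hβ⟩ ⟨β, hβ⟩ h

theorem levelRank_eq_rankAlong_of_isSuccLimit {δ : Ordinal.{u}} (hδ : IsSuccLimit δ) :
    S.levelRank δ = S.rankAlong δ (fun α h => S.p α δ h.le) := by
  ext W α
  have hlt : succ α < succ δ ↔ succ α < δ :=
    ⟨fun h => hδ.succ_lt (succ_lt_succ_iff.mp h), fun h => h.trans (lt_succ δ)⟩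
  exact ⟨fun ⟨h, hne⟩ => ⟨hlt.mp h, hne⟩, fun ⟨h, hne⟩ => ⟨hlt.mpr h, hne⟩⟩

theorem levelRank_succ_inter_preimage_subset {ε : Ordinal.{u}} {V : Set (S.X (succ ε))}
    {W : Set (S.X ε)} (hW : IsOpen W) (hWV : W ⊆ closure (S.p ε (succ ε) (le_succ ε) '' V)) :
    S.levelRank (succ ε) (V ∩ S.p ε (succ ε) (le_succ ε) ⁻¹' W) ⊆ insert ε (S.levelRank ε W) := by
  have hcl (α : Ordinal.{u}) (hα : α ≤ ε) (h : α < succ (succ ε)) :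
      closure (S.levelProj (succ ε) α h '' (V ∩ S.p ε (succ ε) (le_succ ε) ⁻¹' W)) =
        closure (S.levelProj ε α (lt_succ_of_le hα) '' W) := by
    rw [levelProj, levelProj, ← S.image_p_comp hα (le_succ ε),
      ← closure_image_closure (S.p_cont _ _ _),
      closure_image_inter_preimage_of_subset_closure hW hWV,
      closure_image_closure (S.p_cont _ _ _)]
  rintro α ⟨h, hne⟩
  rcases (le_of_lt_succ (succ_lt_succ_iff.mp h)).eq_or_lt with rfl | hlt
  · exact Set.mem_insert _ _
  · rw [hcl α hlt.le, hcl (succ α) (succ_le_of_lt hlt)] at hne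
    exact Set.mem_insert_of_mem _ ⟨succ_lt_succ hlt, hne⟩

theorem isTopologicalBasis_levelRank_succ {ε : Ordinal.{u}}
    (hno : IsNearlyOpenMap (S.p ε (succ ε) (le_succ ε)))
    (hbase : IsTopologicalBasis {W : Set (S.X ε) | IsOpen W ∧ (S.levelRank ε W).Finite}) :
    IsTopologicalBasis
      {W : Set (S.X (succ ε)) | IsOpen W ∧ (S.levelRank (succ ε) W).Finite} := by
  refine isTopologicalBasis_of_isOpen_of_nhds (fun _ hU => hU.1) fun y V hy hV => ?_
  obtain ⟨W, ⟨hW, hWfin⟩, hyW, hWV⟩ :=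
    hbase.exists_subset_of_mem_open (hno V hV ⟨y, hy, rfl⟩) isOpen_interior
  refine ⟨V ∩ S.p ε (succ ε) (le_succ ε) ⁻¹' W, ⟨hV.inter (hW.preimage (S.p_cont _ _ _)), ?_⟩,
    ⟨hy, hyW⟩, Set.inter_subset_left⟩
  exact (hWfin.insert ε).subset
    (S.levelRank_succ_inter_preimage_subset hW (hWV.trans interior_subset))

section Cone

variable {S} {Y : Type*} {δ : Ordinal.{u}} {q : ∀ α, α < δ → Y → S.X α}

theorem rankAlong_eq_empty_of_le_one (hδ : δ ≤ 1) (U : Set Y) : S.rankAlong δ q U = ∅ :=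
  Set.eq_empty_of_forall_notMem fun α ⟨h, _⟩ =>
    (one_le_iff_pos.mpr (bot_lt_succ α)).not_gt (h.trans_le hδ)

theorem isTopologicalBasis_rankAlong_of_le_one [TopologicalSpace Y] (hδ : δ ≤ 1) :
    IsTopologicalBasis {U : Set Y | IsOpen U ∧ (S.rankAlong δ q U).Finite} := by
  simpa only [rankAlong_eq_empty_of_le_one hδ, Set.finite_empty, and_true]
    using TopologicalSpace.isTopologicalBasis_opens

theorem IsCone.image_preimage_of_le (hq : S.IsCone q) {ε α : Ordinal.{u}} (hε : ε < δ)
    (hsurj : Function.Surjective (q ε hε)) (hαε : α ≤ ε) (W : Set (S.X ε)) :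
    q α (hαε.trans_lt hε) '' (q ε hε ⁻¹' W) = S.p α ε hαε '' W := by
  have hfac : q α (hαε.trans_lt hε) = S.p α ε hαε ∘ q ε hε :=
    funext fun y => (hq α ε hαε hε y).symm
  rw [hfac, Set.image_comp, Set.image_preimage_eq W hsurj]

theorem IsCone.image_preimage_of_ge (hq : S.IsCone q) {ε α : Ordinal.{u}} (hα : α < δ)
    (hsurj : Function.Surjective (q α hα)) (hεα : ε ≤ α) (W : Set (S.X ε)) :
    q α hα '' (q ε (hεα.trans_lt hα) ⁻¹' W) = S.p ε α hεα ⁻¹' W := by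
  have hfac : q ε (hεα.trans_lt hα) = S.p ε α hεα ∘ q α hα :=
    funext fun y => (hq ε α hεα hα y).symm
  rw [hfac, Set.preimage_comp, Set.image_preimage_eq _ hsurj]

theorem IsCone.rankAlong_preimage_subset (hq : S.IsCone q)
    (hsurj : ∀ α h, Function.Surjective (q α h))
    (hno : ∀ α, succ α < δ → IsNearlyOpenMap (S.p α (succ α) (le_succ α)))
    {ε : Ordinal.{u}} (hε : ε < δ) {W : Set (S.X ε)} (hW : IsOpen W) :
    S.rankAlong δ q (q ε hε ⁻¹' W) ⊆ S.levelRank ε W := by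
  rintro α ⟨h, hne⟩
  rcases le_or_gt (succ α) ε with hle | hlt
  · rw [hq.image_preimage_of_le hε (hsurj ε hε) ((le_succ α).trans hle),
      hq.image_preimage_of_le hε (hsurj ε hε) hle] at hne
    exact ⟨succ_lt_succ_iff.mpr (lt_of_lt_of_le (lt_succ α) hle), hne⟩
  · have hεα : ε ≤ α := le_of_lt_succ hlt
    rw [hq.image_preimage_of_ge _ (hsurj α _) hεα,
      hq.image_preimage_of_ge h (hsurj (succ α) h) (hεα.trans (le_succ α)),
      ← S.preimage_p_comp hεα (le_succ α),
      (hno α h).interior_preimage_closure_diff_closure_preimage_eq_empty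
        (hW.preimage (S.p_cont ε α hεα))] at hne
    exact absurd hne Set.not_nonempty_empty

theorem IsCone.exists_isOpen_preimage_subset [TopologicalSpace Y] (hq : S.IsCone q)
    (hδ : 0 < δ) (hind : IsInducing fun y (a : {o : Ordinal.{u} // o < δ}) => q a.1 a.2 y)
    {V : Set Y} (hV : IsOpen V) {y : Y} (hy : y ∈ V) :
    ∃ (ε : Ordinal.{u}) (hε : ε < δ) (N : Set (S.X ε)),
      IsOpen N ∧ q ε hε y ∈ N ∧ q ε hε ⁻¹' N ⊆ V := by
  obtain ⟨V', hV', rfl⟩ := hind.isOpen_iff.mp hV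
  obtain ⟨I, u, hu, hIu⟩ := isOpen_pi_iff.mp hV' _ hy
  set m := I.sup Subtype.val
  have hm : m < δ := (Finset.sup_lt_iff hδ).mpr fun a _ => a.2
  have hle (a : I) : a.1.1 ≤ m := Finset.le_sup (f := Subtype.val) a.2
  have hqm (z : Y) (a : I) : S.p a.1.1 m (hle a) (q m hm z) = q a.1.1 a.1.2 z :=
    hq a.1.1 m (hle a) hm z
  refine ⟨m, hm, ⋂ a : I, S.p a.1.1 m (hle a) ⁻¹' u a,
    isOpen_iInter_of_finite fun a => (hu a a.2).1.preimage (S.p_cont _ _ _), ?_,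
    fun z hz => hIu fun a ha => ?_⟩
  · simp only [Set.mem_iInter, Set.mem_preimage, hqm]
    exact fun a => (hu a a.2).2
  · have hza := Set.mem_iInter.mp hz ⟨a, ha⟩
    rwa [Set.mem_preimage, hqm] at hza

theorem IsCone.isTopologicalBasis_rankAlong [TopologicalSpace Y] (hq : S.IsCone q)
    (hδ : 0 < δ) (hind : IsInducing fun y (a : {o : Ordinal.{u} // o < δ}) => q a.1 a.2 y)
    (hsurj : ∀ α h, Function.Surjective (q α h))
    (hno : ∀ α, succ α < δ → IsNearlyOpenMap (S.p α (succ α) (le_succ α)))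
    (hbase : ∀ ε < δ,
      IsTopologicalBasis {W : Set (S.X ε) | IsOpen W ∧ (S.levelRank ε W).Finite}) :
    IsTopologicalBasis {U : Set Y | IsOpen U ∧ (S.rankAlong δ q U).Finite} := by
  refine isTopologicalBasis_of_isOpen_of_nhds (fun _ hU => hU.1) fun y V hy hV => ?_
  obtain ⟨ε, hε, N, hN, hyN, hNV⟩ := hq.exists_isOpen_preimage_subset hδ hind hV hy
  obtain ⟨W, ⟨hW, hWfin⟩, hyW, hWN⟩ := (hbase ε hε).exists_subset_of_mem_open hyN hN
  have hcont : Continuous (q ε hε) :=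
    (continuous_apply (⟨ε, hε⟩ : {o : Ordinal.{u} // o < δ})).comp hind.continuous
  exact ⟨q ε hε ⁻¹' W,
    ⟨hW.preimage hcont, hWfin.subset (hq.rankAlong_preimage_subset hsurj hno hε hW)⟩,
    hyW, (Set.preimage_mono hWN).trans hNV⟩

end Cone

theorem isTopologicalBasis_levelRank (hac : S.AlmostContinuous)
    (hno : ∀ α, succ α < τ → IsNearlyOpenMap (S.p α (succ α) (le_succ α)))
    (δ : Ordinal.{u}) (hδ : δ < τ) :
    IsTopologicalBasis {W : Set (S.X δ) | IsOpen W ∧ (S.levelRank δ W).Finite} := by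
  induction δ using WellFoundedLT.induction with
  | _ δ IH =>
  rcases Ordinal.zero_or_succ_or_isSuccLimit δ with rfl | ⟨ε, rfl⟩ | hlim
  · exact isTopologicalBasis_rankAlong_of_le_one (succ_le_of_lt zero_lt_one)
  · exact S.isTopologicalBasis_levelRank_succ (hno ε hδ)
      (IH ε (lt_succ ε) ((lt_succ ε).trans hδ))
  · rw [S.levelRank_eq_rankAlong_of_isSuccLimit hlim]
    exact (S.isCone_p δ).isTopologicalBasis_rankAlong hlim.pos
      (IsInducing.subtypeVal.comp (hac δ hδ hlim).1.toIsInducing)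
      (fun α h => S.p_surj α δ h.le hδ) (fun α h => hno α (h.trans hδ))
      (fun ε hε => IH ε hε (hε.trans hδ))

end InvSystem

open Order InvSystem in
/-- For an almost continuous inverse system with nearly open bonding maps and
`A = a-lim S`, the open subsets of `A` of finite rank form a base for the topology. -/
theorem finite_rank_basis {τ : Ordinal.{u}} (S : InvSystem τ)
    (A : Set (∀ α : {o : Ordinal.{u} // o < τ}, S.X α.1))
    (hac : S.AlmostContinuous)
    (hno : ∀ (α β : Ordinal.{u}) (h : α ≤ β), β < τ →
      Continuous (S.p α β h) ∧ IsNearlyOpenMap (S.p α β h))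
    (hA : S.IsALim A) :
    TopologicalSpace.IsTopologicalBasis
      {U : Set ↥A | IsOpen U ∧ (S.rank A U).Finite} := by
  rw [rank_eq_rankAlong]
  rcases eq_zero_or_pos τ with rfl | hτ
  · exact isTopologicalBasis_rankAlong_of_le_one zero_le_one
  have hno' (α : Ordinal.{u}) (h : succ α < τ) : IsNearlyOpenMap (S.p α (succ α) (le_succ α)) :=
    (hno α (succ α) (le_succ α) h).2
  exact (S.isCone_proj hA.1).isTopologicalBasis_rankAlong hτ IsInducing.subtypeVal hA.2 hno'
    (S.isTopologicalBasis_levelRank hac hno')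
end

section
/- If each X_α is regularly embedded in Y_α (for α in an index set A), and X is regularly embedded in ∏_{α∈A} X_α via an operator of product form (each basic image being a product of images of regular operators on finitely many coordinates), then X is regularly embedded in ∏_{α∈A} Y_α. In particular, regular embeddability is preserved by products: if X_α ⊆ Y_α are regularly embedded for all α, then ∏ X_α is regularly embedded in ∏ Y_α. -/
open Topology

universe u

/-- A regular operator along an inclusion `i : X → Z`: a map from open subsets of `X`
to open subsets of `Z` sending disjoint sets to disjoint sets, with `i ⁻¹' (e U) = U`. -/
def IsRegularOp {X Z : Type*} [TopologicalSpace X] [TopologicalSpace Z]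
    (i : X → Z) (e : Set X → Set Z) : Prop :=
  (∀ U : Set X, IsOpen U → IsOpen (e U)) ∧
  (∀ U V : Set X, IsOpen U → IsOpen V → U ∩ V = ∅ → e U ∩ e V = ∅) ∧
  (∀ U : Set X, IsOpen U → i ⁻¹' (e U) = U)

lemma key {A : Type u} {Y : A → Type u} [∀ α, TopologicalSpace (Y α)]
    {Xs : ∀ α, Set (Y α)} {r : ∀ α, Set ↥(Xs α) → Set (Y α)}
    (hr : ∀ α, IsRegularOp (Subtype.val : ↥(Xs α) → Y α) (r α))
    {T : Type*} [TopologicalSpace T] (c : T → ∀ α, ↥(Xs α))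
    (E : Set T → Set (∀ α, ↥(Xs α)))
    (hE1 : ∀ U, IsOpen U → c ⁻¹' E U = U)
    (hE2 : ∀ U V, IsOpen U → IsOpen V → U ∩ V = ∅ → E U ∩ E V = ∅)
    (hcov : ∀ U, IsOpen U → ∀ t ∈ U, ∃ (F : Finset A) (V : ∀ α, Set ↥(Xs α)),
      (∀ α, IsOpen (V α)) ∧ {f : ∀ α, ↥(Xs α) | ∀ α ∈ F, f α ∈ V α} ⊆ E U ∧
      (∀ α ∈ F, c t α ∈ V α)) :
    ∃ e' : Set T → Set (∀ α, Y α),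
      IsRegularOp (fun t α => (c t α : Y α)) e' := by
  classical
  set box : Finset A → (∀ α, Set ↥(Xs α)) → Set (∀ α, ↥(Xs α)) :=
    fun F V => {f | ∀ α ∈ F, f α ∈ V α} with hbox
  set rbox : Finset A → (∀ α, Set ↥(Xs α)) → Set (∀ α, Y α) :=
    fun F V => {g | ∀ α ∈ F, g α ∈ r α (V α)} with hrbox
  have hval : ∀ (α) (V : Set ↥(Xs α)), IsOpen V → ∀ x : ↥(Xs α),
      (x : Y α) ∈ r α V ↔ x ∈ V := by
    intro α V hV x
    exact Set.ext_iff.mp ((hr α).2.2 V hV) x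
  refine ⟨fun U => ⋃ (p : Finset A × (∀ α, Set ↥(Xs α)))
      (_ : (∀ α, IsOpen (p.2 α)) ∧ box p.1 p.2 ⊆ E U ∧ (box p.1 p.2).Nonempty),
      rbox p.1 p.2, ?_, ?_, ?_⟩
  · -- openness
    intro U _
    refine isOpen_iUnion fun p => isOpen_iUnion fun hp => ?_
    have : rbox p.1 p.2 = ⋂ α ∈ p.1, (fun g : ∀ α, Y α => g α) ⁻¹' (r α (p.2 α)) := by
      ext g; simp [hrbox]
    rw [this]
    exact isOpen_biInter_finset fun α _ =>
      ((hr α).1 _ (hp.1 α)).preimage (continuous_apply α)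
  · -- disjointness
    intro U V hU hV hUV
    rw [Set.eq_empty_iff_forall_notMem]
    rintro g ⟨hg1, hg2⟩
    simp only [Set.mem_iUnion] at hg1 hg2
    obtain ⟨p₁, hp₁, hgp₁⟩ := hg1
    obtain ⟨p₂, hp₂, hgp₂⟩ := hg2
    obtain ⟨f₀, hf₀⟩ := hp₁.2.2
    obtain ⟨f₁, hf₁⟩ := hp₂.2.2
    have hne : ∀ α, α ∈ p₁.1 → α ∈ p₂.1 → (p₁.2 α ∩ p₂.2 α).Nonempty := by
      intro α h1 h2
      rw [Set.nonempty_iff_ne_empty]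
      intro hemp
      have := (hr α).2.1 _ _ (hp₁.1 α) (hp₂.1 α) hemp
      have hg : g α ∈ r α (p₁.2 α) ∩ r α (p₂.2 α) := ⟨hgp₁ α h1, hgp₂ α h2⟩
      rw [this] at hg
      exact hg
    set x : ∀ α, ↥(Xs α) := fun α =>
      if h : α ∈ p₁.1 ∧ α ∈ p₂.1 then (hne α h.1 h.2).some
      else if α ∈ p₂.1 then f₁ α else f₀ α with hx
    have hx1 : x ∈ box p₁.1 p₁.2 := by
      intro α hα
      by_cases h2 : α ∈ p₂.1
      · have : x α = (hne α hα h2).some := dif_pos ⟨hα, h2⟩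
        rw [this]; exact (hne α hα h2).some_mem.1
      · have : x α = f₀ α := by
          rw [hx]; simp only [dif_neg (fun h : α ∈ p₁.1 ∧ α ∈ p₂.1 => h2 h.2)]
          rw [if_neg h2]
        rw [this]; exact hf₀ α hα
    have hx2 : x ∈ box p₂.1 p₂.2 := by
      intro α hα
      by_cases h1 : α ∈ p₁.1
      · have : x α = (hne α h1 hα).some := dif_pos ⟨h1, hα⟩
        rw [this]; exact (hne α h1 hα).some_mem.2
      · have : x α = f₁ α := by
          rw [hx]; simp only [dif_neg (fun h : α ∈ p₁.1 ∧ α ∈ p₂.1 => h1 h.1)]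
          rw [if_pos hα]
        rw [this]; exact hf₁ α hα
    have : x ∈ E U ∩ E V := ⟨hp₁.2.1 hx1, hp₂.2.1 hx2⟩
    rw [hE2 U V hU hV hUV] at this
    exact this
  · -- preimage
    intro U hU
    ext t
    simp only [Set.mem_preimage, Set.mem_iUnion]
    constructor
    · rintro ⟨p, hp, hgt⟩
      have hct : c t ∈ box p.1 p.2 := by
        intro α hα
        exact (hval α (p.2 α) (hp.1 α) (c t α)).mp (hgt α hα)
      have : c t ∈ E U := hp.2.1 hct
      rw [← hE1 U hU]
      exact this
    · intro ht
      obtain ⟨F, V, hVopen, hsub, hmem⟩ := hcov U hU t ht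
      refine ⟨(F, V), ⟨hVopen, hsub, ⟨c t, hmem⟩⟩, ?_⟩
      intro α hα
      exact (hval α (V α) (hVopen α) (c t α)).mpr (hmem α hα)

/-- If each `X_α` is regularly embedded in `Y_α` and `X ⊆ ∏ X_α` is regularly embedded
in `∏ X_α` via an operator of product form (each basic image is a product of open sets
on finitely many coordinates), then `X` is regularly embedded in `∏ Y_α`. In particular,
`∏ X_α` is regularly embedded in `∏ Y_α`. -/
theorem regular_embedding_product {A : Type u} {Y : A → Type u}
    [∀ α, TopologicalSpace (Y α)] (Xs : ∀ α, Set (Y α))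
    (r : ∀ α, Set ↥(Xs α) → Set (Y α))
    (hr : ∀ α, IsRegularOp (Subtype.val : ↥(Xs α) → Y α) (r α))
    (X : Set (∀ α, ↥(Xs α)))
    (e : Set ↥X → Set (∀ α, ↥(Xs α)))
    (he : IsRegularOp (Subtype.val : ↥X → ∀ α, ↥(Xs α)) e)
    (hform : ∀ U : Set ↥X, IsOpen U → ∃ (ι : Type u) (F : ι → Finset A)
      (V : ι → ∀ α, Set ↥(Xs α)), (∀ i α, IsOpen (V i α)) ∧
        e U = ⋃ i, {f : ∀ α, ↥(Xs α) | ∀ α ∈ F i, f α ∈ V i α}) :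
    (∃ e' : Set ↥X → Set (∀ α, Y α),
      IsRegularOp (fun (f : ↥X) (α : A) => (f.1 α : Y α)) e') ∧
    (∃ e'' : Set ↥(Set.univ.pi Xs) → Set (∀ α, Y α),
      IsRegularOp (Subtype.val : ↥(Set.univ.pi Xs) → ∀ α, Y α) e'') := by
  constructor
  · -- Part 1
    refine key hr (Subtype.val : ↥X → ∀ α, ↥(Xs α)) e he.2.2 he.2.1 ?_
    intro U hU t ht
    obtain ⟨ι, F, V, hVopen, heq⟩ := hform U hU
    have htm : (t : ∀ α, ↥(Xs α)) ∈ e U := by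
      rw [← he.2.2 U hU] at ht; exact ht
    rw [heq] at htm
    obtain ⟨i, hi⟩ := Set.mem_iUnion.mp htm
    refine ⟨F i, V i, fun α => hVopen i α, ?_, fun α hα => hi α hα⟩
    rw [heq]
    exact Set.subset_iUnion (fun i => {f : ∀ α, ↥(Xs α) | ∀ α ∈ F i, f α ∈ V i α}) i
  · -- Part 2
    set c : ↥(Set.univ.pi Xs) → ∀ α, ↥(Xs α) :=
      fun f α => ⟨f.1 α, f.2 α (Set.mem_univ α)⟩ with hc
    have hcinj : Function.Injective c := by
      intro f g h
      apply Subtype.ext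
      funext α
      exact congrArg Subtype.val (congrFun h α)
    have h1 : ∀ U : Set ↥(Set.univ.pi Xs), IsOpen U → c ⁻¹' (c '' U) = U :=
      fun U _ => Set.preimage_image_eq U hcinj
    have h2 : ∀ U V : Set ↥(Set.univ.pi Xs), IsOpen U → IsOpen V → U ∩ V = ∅ →
        (c '' U) ∩ (c '' V) = ∅ := by
      intro U V _ _ hUV
      rw [← Set.image_inter hcinj, hUV, Set.image_empty]
    have h3 : ∀ U : Set ↥(Set.univ.pi Xs), IsOpen U → ∀ t ∈ U,
        ∃ (F : Finset A) (V : ∀ α, Set ↥(Xs α)),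
        (∀ α, IsOpen (V α)) ∧ {f : ∀ α, ↥(Xs α) | ∀ α ∈ F, f α ∈ V α} ⊆ c '' U ∧
        (∀ α ∈ F, c t α ∈ V α) := by
      intro U hU t ht
      obtain ⟨O, hO, hOU⟩ := isOpen_induced_iff.mp hU
      have htO : (t : ∀ α, Y α) ∈ O := by rw [← hOU] at ht; exact ht
      obtain ⟨F, u, hu, hsub⟩ := isOpen_pi_iff.mp hO _ htO
      classical
      refine ⟨F, fun α => if α ∈ F then (Subtype.val : ↥(Xs α) → Y α) ⁻¹' u α
        else Set.univ, fun α => ?_, ?_, ?_⟩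
      · dsimp only
        by_cases hα : α ∈ F
        · rw [if_pos hα]
          exact (hu α hα).1.preimage continuous_subtype_val
        · rw [if_neg hα]
          exact isOpen_univ
      · intro x hx
        have hxm : (fun α => (x α : Y α)) ∈ Set.univ.pi Xs :=
          fun α _ => (x α).2
        refine ⟨⟨fun α => (x α : Y α), hxm⟩, ?_, ?_⟩
        · rw [← hOU]
          apply hsub
          intro α hα
          have := hx α hα
          dsimp only at this
          rw [if_pos (Finset.mem_coe.mp hα)] at this
          exact this
        · funext α; rfl
      · intro α hα
        dsimp only
        rw [if_pos hα]
        exact (hu α hα).2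
    obtain ⟨e'', he''⟩ := key hr c (fun U => c '' U) h1 h2 h3
    exact ⟨e'', he''⟩
end
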